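/- Let C be a linear code of length n over a finite commutative Frobenius ring R. Then (C⊥)⊥ = C. -/

import Mathlib

noncomputable section
open scoped BigOperators

/-- The dual of a linear code `C ⊆ Rⁿ` with respect to the standard inner
product `u·v = ∑ ℓ, u ℓ * v ℓ`. -/
def dualCode {R : Type*} [CommRing R] {n : ℕ} (C : Submodule R (Fin n → R)) :
    Submodule R (Fin n → R) where
  carrier := {v | ∀ u ∈ C, ∑ ℓ, u ℓ * v ℓ = 0}
  add_mem' := by
    intro v w hv hw u hu
    simp only [Set.mem_setOf_eq] at *
    have h1 := hv u hu
    have h2 := hw u hu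
    simp only [Pi.add_apply, mul_add, Finset.sum_add_distrib, h1, h2, add_zero]
  zero_mem' := by
    intro u hu
    simp
  smul_mem' := by
    intro c v hv u hu
    simp only [Set.mem_setOf_eq] at *
    have h := hv u hu
    have : ∑ ℓ, u ℓ * (c • v) ℓ = c * ∑ ℓ, u ℓ * v ℓ := by
      rw [Finset.mul_sum]
      exact Finset.sum_congr rfl fun ℓ _ => by
        simp only [Pi.smul_apply, smul_eq_mul]; ring
    rw [this, h, mul_zero]

/-- A finite commutative ring is Frobenius iff `|C|·|C⊥| = |R|ⁿ` for every
linear code `C` of every length `n` over `R`. -/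
def IsFrobeniusRing (R : Type*) [CommRing R] [Fintype R] : Prop :=
  ∀ (n : ℕ) (C : Submodule R (Fin n → R)),
    Nat.card C * Nat.card (dualCode C) = Fintype.card R ^ n

theorem le_dualCode_dualCode {R : Type*} [CommRing R] {n : ℕ} (C : Submodule R (Fin n → R)) :
    C ≤ dualCode (dualCode C) := fun v hv u hu => by
  simpa only [mul_comm] using hu v hv

theorem IsFrobeniusRing.card_dualCode_dualCode {R : Type*} [CommRing R] [Fintype R]
    (hR : IsFrobeniusRing R) {n : ℕ} (C : Submodule R (Fin n → R)) :
    Nat.card (dualCode (dualCode C)) = Nat.card C := by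
  refine Nat.eq_of_mul_eq_mul_left (Nat.card_pos (α := dualCode C)) ?_
  rw [hR n (dualCode C), mul_comm, hR n C]

theorem stmt1 {R : Type*} [CommRing R] [Fintype R] (hR : IsFrobeniusRing R)
    {n : ℕ} (C : Submodule R (Fin n → R)) :
    dualCode (dualCode C) = C :=
  (SetLike.coe_injective <| Set.Finite.eq_of_subset_of_card_le (Set.toFinite _)
    (le_dualCode_dualCode C) (hR.card_dualCode_dualCode C).le).symm

end
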